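/- Let Q be a divisible commutative quantale and a ≤ b ≤ c in Q. Then for every x ≤ c, a ⊗_b (b ⊗_c x) = a ⊗_c x, and both sides equal a ⊗ (c ⧵ x); i.e. the smooth slice construction Q/(−) is functorial in the slicing element. -/

import Mathlib

/-!
In a divisible quantale `c ⊗ (c ⧵ u) = u` whenever `u ≤ c`, so the slice product collapses to
`u ⊗_c v = u ⊗ (c ⧵ v)`. The remaining factor `b ⧵ (b ⊗ t)` is then absorbed by `a`: writing
`a = b ⊗ d`, one has `a ⊗ (b ⧵ (b ⊗ t)) = d ⊗ b ⊗ (b ⧵ (b ⊗ t)) ≤ d ⊗ b ⊗ t = a ⊗ t`.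
-/

/-- Residuation in a quantale: `a ⧵ b = sSup {c | a * c ≤ b}`. -/
def res {Q : Type*} [Mul Q] [CompleteLattice Q] (a b : Q) : Q := sSup {c | a * c ≤ b}

/-- The smooth slice multiplication on `[⊥, c]`: `u ⊗_c v = c * (c ⧵ u) * (c ⧵ v)`. -/
def smul {Q : Type*} [Mul Q] [CompleteLattice Q] (c u v : Q) : Q := c * res c u * res c v

section Semigroup

variable {Q : Type*} [Semigroup Q] [CompleteLattice Q] [IsQuantale Q]

theorem le_res_iff {a b t : Q} : t ≤ res a b ↔ a * t ≤ b :=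
  Quantale.rightMulResiduation_le_iff_mul_le

theorem mul_res_le (a b : Q) : a * res a b ≤ b :=
  le_res_iff.1 le_rfl

theorem mul_res_of_dvd {a b : Q} (h : b ∣ a) : b * res b a = a := by
  obtain ⟨d, rfl⟩ := h
  exact le_antisymm (mul_res_le _ _) (mul_le_mul_right (le_res_iff.2 le_rfl) b)

theorem smul_of_dvd {c u : Q} (h : c ∣ u) (v : Q) : smul c u v = u * res c v := by
  rw [smul, mul_res_of_dvd h]

end Semigroup

theorem mul_res_mul_of_dvd {Q : Type*} [CommSemigroup Q] [CompleteLattice Q] [IsQuantale Q]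
    {a b : Q} (h : b ∣ a) (t : Q) : a * res b (b * t) = a * t := by
  obtain ⟨d, rfl⟩ := h
  refine le_antisymm ?_ (mul_le_mul_right (le_res_iff.2 le_rfl) _)
  calc b * d * res b (b * t) = d * (b * res b (b * t)) := by rw [mul_comm b d, mul_assoc]
    _ ≤ d * (b * t) := mul_le_mul_right (mul_res_le b _) d
    _ = b * d * t := by rw [mul_comm b d, mul_assoc]

/-- In a divisible commutative quantale, for `a ≤ b ≤ c` and `x ≤ c`,
`a ⊗_b (b ⊗_c x) = a ⊗_c x = a * (c ⧵ x)`; the smooth slice construction is functorial. -/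
theorem smooth_slice_functorial {Q : Type*} [CommSemigroup Q] [CompleteLattice Q] [IsQuantale Q]
    (hdiv : ∀ a b : Q, a ≤ b → ∃ c, a = b * c)
    {a b c : Q} (hab : a ≤ b) (hbc : b ≤ c) :
    ∀ x : Q, x ≤ c →
      smul b a (smul c b x) = smul c a x ∧ smul c a x = a * res c x := by
  intro x _
  have dvd_of_le {u v : Q} (h : u ≤ v) : v ∣ u := hdiv u v h
  rw [smul_of_dvd (dvd_of_le hab), smul_of_dvd (dvd_of_le hbc),
    smul_of_dvd (dvd_of_le (hab.trans hbc)), mul_res_mul_of_dvd (dvd_of_le hab)]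
  exact ⟨rfl, rfl⟩
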